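/- For any real p > 1, any α > 0 and any t₀ > 0, there exists a constant c_p > 0 (depending only on p and α) such that for all t ≥ 0, (1 + α) t^{p-1} − |t − t₀|^{p-2}(t − t₀) ≥ c_p t₀^{p-1}. -/

import Mathlib

/-! For `t ≥ t₀` the signed power `(t - t₀) ^ (p - 1)` is at most `t ^ (p - 1)`, which leaves
`α t ^ (p - 1) ≥ α t₀ ^ (p - 1)`. For `t < t₀` the signed power is `-(t₀ - t) ^ (p - 1)`, and
`t ^ (p - 1) + (t₀ - t) ^ (p - 1)` dominates the power of the larger summand, which is at
least `t₀ / 2`. Hence `c = min α ((1/2) ^ (p - 1))` works. -/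

namespace Real

lemma abs_rpow_sub_two_mul_self_of_nonneg {p s : ℝ} (hp : p ≠ 1) (hs : 0 ≤ s) :
    |s| ^ (p - 2) * s = s ^ (p - 1) := by
  rcases hs.eq_or_lt with rfl | hs
  · rw [mul_zero, zero_rpow (sub_ne_zero.2 hp)]
  · rw [abs_of_pos hs, show p - 1 = p - 2 + 1 by ring, rpow_add_one hs.ne']

lemma abs_rpow_sub_two_mul_self_of_nonpos {p s : ℝ} (hp : p ≠ 1) (hs : s ≤ 0) :
    |s| ^ (p - 2) * s = -(-s) ^ (p - 1) := by
  rw [← abs_rpow_sub_two_mul_self_of_nonneg hp (neg_nonneg.2 hs), abs_neg, mul_neg, neg_neg]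

lemma half_rpow_mul_add_rpow_le {a b r : ℝ} (ha : 0 ≤ a) (hb : 0 ≤ b) (hr : 0 ≤ r) :
    (1 / 2) ^ r * (a + b) ^ r ≤ a ^ r + b ^ r :=
  calc (1 / 2) ^ r * (a + b) ^ r = ((a + b) / 2) ^ r := by
        rw [← mul_rpow (by norm_num) (by positivity)]; ring_nf
    _ ≤ max a b ^ r :=
        rpow_le_rpow (by positivity) (by linarith [le_max_left a b, le_max_right a b]) hr
    _ = max (a ^ r) (b ^ r) := rpow_max ha hb hr
    _ ≤ a ^ r + b ^ r := max_le_add_of_nonneg (rpow_nonneg ha r) (rpow_nonneg hb r)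

end Real

open Real

/-- For `p > 1`, `α > 0` and `t₀ > 0` there exists `c_p > 0`, depending only
on `p` and `α`, such that `(1+α) t^{p-1} − |t − t₀|^{p-2}(t − t₀) ≥ c_p t₀^{p-1}`
for all `t ≥ 0`. -/
theorem tail_term_lower_bound (p α : ℝ) (hp : 1 < p) (hα : 0 < α) :
    ∃ c > (0 : ℝ), ∀ t₀ : ℝ, 0 < t₀ → ∀ t : ℝ, 0 ≤ t →
      c * t₀ ^ (p - 1) ≤ (1 + α) * t ^ (p - 1) - |t - t₀| ^ (p - 2) * (t - t₀) := by
  have hp₁ : 0 ≤ p - 1 := by linarith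
  refine ⟨min α ((1 / 2) ^ (p - 1)), lt_min hα (by positivity), fun t₀ ht₀ t ht => ?_⟩
  have htp : 0 ≤ t ^ (p - 1) := rpow_nonneg ht _
  rcases le_total t₀ t with h | h
  · rw [abs_rpow_sub_two_mul_self_of_nonneg hp.ne' (sub_nonneg.2 h)]
    have hsub : (t - t₀) ^ (p - 1) ≤ t ^ (p - 1) :=
      rpow_le_rpow (by linarith) (by linarith) hp₁
    calc min α ((1 / 2) ^ (p - 1)) * t₀ ^ (p - 1)
        ≤ α * t₀ ^ (p - 1) := by gcongr; exact min_le_left _ _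
      _ ≤ α * t ^ (p - 1) := by gcongr
      _ ≤ _ := by linarith
  · rw [abs_rpow_sub_two_mul_self_of_nonpos hp.ne' (sub_nonpos.2 h), neg_sub]
    calc min α ((1 / 2) ^ (p - 1)) * t₀ ^ (p - 1)
        ≤ (1 / 2) ^ (p - 1) * (t + (t₀ - t)) ^ (p - 1) := by
          rw [add_sub_cancel]; gcongr; exact min_le_right _ _
      _ ≤ t ^ (p - 1) + (t₀ - t) ^ (p - 1) := half_rpow_mul_add_rpow_le ht (by linarith) hp₁
      _ ≤ _ := by linarith [mul_nonneg hα.le htp]
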